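/- Let X have the power distribution with quantile function Q_X(v) = v (b = 1) so that Y = 1/X has the Pareto distribution with quantile function Q_Y(v) = (1−v)^{−1} and quantile density q_Y(v) = (1−v)^{−2}. Then for every η > 1 the quantile-based fractional generalized cumulative past entropy of Y equals ζ(η) − ζ(η+1); that is, (1/Γ(η+1)) ∫₀¹ p (−ln p)^η (1−p)^{−2} dp = ζ(η) − ζ(η+1), where ζ(s) = Σ_{k≥1} k^{−s}. -/

import Mathlib

open MeasureTheory Real
open Set

/-- The Riemann zeta function on the reals, `ζ(s) = Σ_{k ≥ 1} k ^ (-s)`. -/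
noncomputable def zetaReal (s : ℝ) : ℝ := ∑' n : ℕ, 1 / ((n : ℝ) + 1) ^ s

lemma image_exp_neg : (fun t : ℝ => Real.exp (-t)) '' Ioi 0 = Ioo 0 1 := by
  ext x
  constructor
  · rintro ⟨t, ht, rfl⟩
    exact ⟨Real.exp_pos _, by
      rw [Real.exp_lt_one_iff]; linarith [Set.mem_Ioi.mp ht]⟩
  · rintro ⟨hx0, hx1⟩
    exact ⟨-Real.log x, by simpa using Real.log_neg hx0 hx1,
      by simp [Real.exp_log hx0]⟩

lemma hasDeriv_exp_neg (t : ℝ) (ht : t ∈ Ioi (0:ℝ)) :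
    HasDerivWithinAt (fun t : ℝ => Real.exp (-t)) (-Real.exp (-t)) (Ioi 0) t := by
  have : HasDerivAt (fun t : ℝ => Real.exp (-t)) (Real.exp (-t) * (-1)) t :=
    (Real.hasDerivAt_exp (-t)).comp t ((hasDerivAt_id t).neg)
  simpa using this.hasDerivWithinAt

lemma injOn_exp_neg : Set.InjOn (fun t : ℝ => Real.exp (-t)) (Ioi 0) := by
  intro a _ b _ h
  have := Real.exp_injective h
  linarith

lemma key_eq_on (η : ℝ) (n : ℕ) : ∀ t ∈ Ioi (0:ℝ),
    |(-Real.exp (-t))| • ((Real.exp (-t)) ^ (n+1) * (-Real.log (Real.exp (-t))) ^ η)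
      = t ^ ((η+1)-1) * Real.exp (-(((n:ℝ)+2) * t)) := by
  intro t ht
  rw [abs_neg, abs_of_pos (Real.exp_pos _), Real.log_exp, neg_neg, smul_eq_mul,
    add_sub_cancel_right, ← Real.exp_nat_mul, ← mul_assoc, ← Real.exp_add,
    show (-t + ((n+1:ℕ):ℝ) * (-t)) = -(((n:ℝ)+2)*t) by push_cast; ring]
  ring

lemma key_integrand_integrable (η : ℝ) (hη : 0 < η) (n : ℕ) :
    IntegrableOn (fun t : ℝ => t ^ ((η+1)-1) * Real.exp (-(((n:ℝ)+2) * t))) (Ioi 0) := by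
  have hdom : IntegrableOn (fun t : ℝ => Real.exp (-t) * t ^ ((η+1)-1)) (Ioi 0) :=
    Real.GammaIntegral_convergent (by linarith)
  refine Integrable.mono hdom ?_ ?_
  · apply Measurable.aestronglyMeasurable
    fun_prop
  · filter_upwards [self_mem_ae_restrict measurableSet_Ioi] with t ht
    have ht0 : (0:ℝ) < t := ht
    rw [Real.norm_eq_abs, Real.norm_eq_abs, abs_of_nonneg (by positivity),
      abs_of_nonneg (by positivity)]
    rw [mul_comm (Real.exp (-t))]
    apply mul_le_mul_of_nonneg_left _ (by positivity)
    apply Real.exp_le_exp.mpr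
    nlinarith [Nat.cast_nonneg (α := ℝ) n]

lemma key_integral (η : ℝ) (hη : 0 < η) (n : ℕ) :
    ∫ p in Ioo (0:ℝ) 1, p ^ (n+1) * (-Real.log p) ^ η
      = (1/((n:ℝ)+2)) ^ (η+1) * Real.Gamma (η+1) := by
  have h := integral_image_eq_integral_abs_deriv_smul measurableSet_Ioi
    (hasDeriv_exp_neg) injOn_exp_neg
    (fun p : ℝ => p ^ (n+1) * (-Real.log p) ^ η)
  rw [image_exp_neg] at h
  rw [h, setIntegral_congr_fun measurableSet_Ioi (key_eq_on η n)]
  exact Real.integral_rpow_mul_exp_neg_mul_Ioi (by linarith) (by positivity)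

lemma key_integrableOn (η : ℝ) (hη : 0 < η) (n : ℕ) :
    IntegrableOn (fun p : ℝ => p ^ (n+1) * (-Real.log p) ^ η) (Ioo 0 1) := by
  have h := integrableOn_image_iff_integrableOn_abs_deriv_smul measurableSet_Ioi
    (hasDeriv_exp_neg) injOn_exp_neg
    (fun p : ℝ => p ^ (n+1) * (-Real.log p) ^ η)
  rw [image_exp_neg] at h
  rw [h]
  exact (key_integrand_integrable η hη n).congr_fun (fun t ht => (key_eq_on η n t ht).symm)
    measurableSet_Ioi

-- summability of shifted zeta terms
lemma summable_shift (s : ℝ) (hs : 1 < s) :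
    Summable (fun n : ℕ => 1 / ((n:ℝ)+2) ^ s) := by
  have h := (Real.summable_one_div_nat_rpow (p := s)).mpr hs
  have := (summable_nat_add_iff (f := fun n : ℕ => 1 / (n:ℝ) ^ s) 2).mpr h
  convert this using 2 with n
  · rfl
  push_cast
  ring_nf

lemma summable_zeta (s : ℝ) (hs : 1 < s) :
    Summable (fun n : ℕ => 1 / ((n:ℝ)+1) ^ s) := by
  have h := (Real.summable_one_div_nat_rpow (p := s)).mpr hs
  have := (summable_nat_add_iff (f := fun n : ℕ => 1 / (n:ℝ) ^ s) 1).mpr h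
  convert this using 2 with n
  · rfl
  push_cast
  ring_nf

lemma zetaReal_sub_one (s : ℝ) (hs : 1 < s) :
    zetaReal s - 1 = ∑' n : ℕ, 1 / ((n:ℝ)+2) ^ s := by
  rw [zetaReal, Summable.tsum_eq_zero_add (summable_zeta s hs)]
  push_cast
  norm_num
  congr 1
  ext n
  push_cast
  ring_nf


/-- If `X` has the power distribution with quantile function `Q_X(v) = v`
(case `b = 1`), then `Y = 1/X` has the Pareto distribution with quantile function
`Q_Y(v) = (1-v)⁻¹` and quantile density `q_Y(v) = (1-v)⁻²`, and for `η > 1` the QFGCPE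
of `Y` equals `ζ(η) - ζ(η+1)`. -/
theorem qfgcpe_pareto (η : ℝ) (hη : 1 < η) :
    (1 / Real.Gamma (η + 1)) *
        ∫ p in (0 : ℝ)..1, p * (-Real.log p) ^ η * ((1 - p) ^ 2)⁻¹
      = zetaReal η - zetaReal (η + 1) := by
  have hη0 : 0 < η := by linarith
  have hΓ : 0 < Real.Gamma (η + 1) := Real.Gamma_pos_of_pos (by linarith)
  set F : ℕ → ℝ → ℝ := fun n p => ((n:ℝ)+1) * (p ^ (n+1) * (-Real.log p) ^ η) with hF
  -- pointwise series expansion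
  have hpt : ∀ p ∈ Ioo (0:ℝ) 1,
      p * (-Real.log p) ^ η * ((1 - p) ^ 2)⁻¹ = ∑' n, F n p := by
    intro p hp
    have hnorm : ‖p‖ < 1 := by rw [Real.norm_eq_abs, abs_of_pos hp.1]; exact hp.2
    have h2 := (hasSum_choose_mul_geometric_of_norm_lt_one 1 hnorm).mul_right
      (p * (-Real.log p) ^ η)
    have hfun : (fun n : ℕ => ((((n+1).choose 1 : ℕ)):ℝ) * p ^ n * (p * (-Real.log p) ^ η))
        = fun n => F n p := by
      funext n
      simp only [Nat.choose_one_right, hF]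
      push_cast
      ring
    rw [hfun] at h2
    rw [h2.tsum_eq]
    ring
  have hval : ∀ n : ℕ, ∫ p in Ioo (0:ℝ) 1, F n p
      = ((n:ℝ)+1) * ((1/((n:ℝ)+2)) ^ (η+1) * Real.Gamma (η+1)) := by
    intro n
    simp only [hF]
    rw [integral_const_mul, key_integral η hη0 n]
  have hInt : ∀ n : ℕ, Integrable (F n) (volume.restrict (Ioo (0:ℝ) 1)) := fun n =>
    (key_integrableOn η hη0 n).const_mul _
  have hnormeq : ∀ n : ℕ, ∫ p in Ioo (0:ℝ) 1, ‖F n p‖ = ∫ p in Ioo (0:ℝ) 1, F n p := by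
    intro n
    apply setIntegral_congr_fun measurableSet_Ioo
    intro p hp
    have h1 : 0 < -Real.log p := by simpa using Real.log_neg hp.1 hp.2
    have h0 := hp.1
    show ‖F n p‖ = F n p
    rw [Real.norm_eq_abs, abs_of_nonneg]
    simp only [hF]
    positivity
  -- the value of each integral rewritten as a zeta-type difference
  have hg : ∀ n : ℕ, ((n:ℝ)+1) * ((1/((n:ℝ)+2)) ^ (η+1) * Real.Gamma (η+1))
      = Real.Gamma (η+1) * (1/((n:ℝ)+2) ^ η - 1/((n:ℝ)+2) ^ (η+1)) := by
    intro n
    have h2 : (0:ℝ) < (n:ℝ)+2 := by positivity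
    have hx : (0:ℝ) < ((n:ℝ)+2) ^ η := Real.rpow_pos_of_pos h2 η
    have e1 : ((1:ℝ)/((n:ℝ)+2)) ^ (η+1) = 1/((n:ℝ)+2) ^ (η+1) := by
      rw [Real.div_rpow zero_le_one h2.le, Real.one_rpow]
    have e2 : ((n:ℝ)+2) ^ (η+1) = ((n:ℝ)+2) ^ η * ((n:ℝ)+2) := by
      rw [Real.rpow_add h2, Real.rpow_one]
    rw [e1, e2]
    field_simp
    ring
  have hSummand : Summable (fun n : ℕ =>
      Real.Gamma (η+1) * (1/((n:ℝ)+2) ^ η - 1/((n:ℝ)+2) ^ (η+1))) :=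
    ((summable_shift η hη).sub (summable_shift (η+1) (by linarith))).mul_left _
  have hSum : Summable (fun n : ℕ => ∫ p in Ioo (0:ℝ) 1, ‖F n p‖) := by
    apply hSummand.congr
    intro n
    rw [hnormeq, hval, hg]
  -- main computation
  rw [intervalIntegral.integral_of_le zero_le_one, integral_Ioc_eq_integral_Ioo,
    setIntegral_congr_fun measurableSet_Ioo hpt,
    ← integral_tsum_of_summable_integral_norm hInt hSum]
  have : (∑' n : ℕ, ∫ p in Ioo (0:ℝ) 1, F n p)
      = Real.Gamma (η+1) * ((zetaReal η - 1) - (zetaReal (η+1) - 1)) := by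
    rw [tsum_congr (fun n => by rw [hval, hg]),
      tsum_mul_left,
      Summable.tsum_sub (summable_shift η hη) (summable_shift (η+1) (by linarith)),
      zetaReal_sub_one η hη, zetaReal_sub_one (η+1) (by linarith)]
  rw [this]
  field_simp
  ring
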